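/- arXiv:2503.05036 — 5 statements merged into one kernel-verified Lean document; each statement's English description precedes it below -/
import Mathlib

section
/- For all vectors a, b, x, y in H and every q ∈ [0,1] such that ‖x‖ = ‖y‖ = 1 and ⟨x,y⟩ = q, one has |⟨a,x⟩·⟨b,y⟩| ≤ (‖a‖·‖b‖ + q·|⟨a,b⟩|)/2 + (√(1−q²)/2)·√(‖a‖²·‖b‖² − |⟨a,b⟩|²) (generalized Buzano inequality). -/
/-!
Write `x = α e + β f` and `y = α e - β f` with `e, f` orthonormal, `α² = (1 + q) / 2` and
`β² = (1 - q) / 2`. Projecting `a` and `b` onto `span {e, f}` does not change the left-hand side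
and can only lower the right-hand side, because `‖a‖ ‖b‖ ± |⟨a, b⟩|` can only decrease under an
orthogonal projection. In the plane, with coordinates `c` of `a` and `d` of `b`, the product is
`((1 + q) c₁ d₁ - (1 - q) c₂ d₂) / 2 + α β (c₂ d₁ - c₁ d₂)`. After a phase rotation, the first
term is bounded by `(‖a‖ ‖b‖ + q |⟨a, b⟩|) / 2`, and by Lagrange's identity the determinant has
modulus `√(‖a‖² ‖b‖² - |⟨a, b⟩|²)`.
-/

open scoped ComplexInnerProductSpace ComplexConjugate

noncomputable def buzanoBound (q P T : ℝ) : ℝ :=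
  (P + q * T) / 2 + (√(1 - q ^ 2) / 2) * √(P ^ 2 - T ^ 2)

theorem buzanoBound_le_buzanoBound {q P T P' T' : ℝ} (hq₀ : 0 ≤ q) (hq₁ : q ≤ 1)
    (hT' : 0 ≤ T') (hTP' : T' ≤ P') (h : |T - T'| ≤ P - P') :
    buzanoBound q P' T' ≤ buzanoBound q P T := by
  obtain ⟨h₁, h₂⟩ := abs_le.1 h
  have hlin : P' + q * T' ≤ P + q * T := by nlinarith
  have hsq : P' ^ 2 - T' ^ 2 ≤ P ^ 2 - T ^ 2 := by nlinarith
  unfold buzanoBound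
  gcongr

theorem mul_add_mul_le_mul_of_sq_eq_add_sq {p p' r r' A B : ℝ} (hA : 0 ≤ A) (hB : 0 ≤ B)
    (hA2 : A ^ 2 = p ^ 2 + p' ^ 2) (hB2 : B ^ 2 = r ^ 2 + r' ^ 2) : p * r + p' * r' ≤ A * B := by
  apply le_of_sq_le_sq _ (by positivity)
  nlinarith [sq_nonneg (p * r' - p' * r)]

theorem sqrt_one_sub_sq_div_two_eq_mul {α β q : ℝ} (hα : 0 ≤ α) (hβ : 0 ≤ β)
    (hα2 : α ^ 2 = (1 + q) / 2) (hβ2 : β ^ 2 = (1 - q) / 2) : √(1 - q ^ 2) / 2 = α * β := by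
  rw [eq_comm, ← Real.sqrt_sq (mul_nonneg hα hβ), mul_pow, hα2, hβ2,
    show (1 + q) / 2 * ((1 - q) / 2) = (1 - q ^ 2) / 2 ^ 2 by ring,
    Real.sqrt_div' _ (by positivity), Real.sqrt_sq zero_le_two]

namespace Complex

theorem exists_norm_eq_one_eq_mul_conj (c : ℂ) : ∃ ω : ℂ, ‖ω‖ = 1 ∧ c = ω * conj c := by
  rcases eq_or_ne c 0 with rfl | hc
  · exact ⟨1, by simp⟩
  · have hc' : conj c ≠ 0 := (map_ne_zero _).2 hc
    exact ⟨c / conj c, by rw [norm_div, norm_conj, div_self (norm_ne_zero_iff.2 hc)],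
      (div_mul_cancel₀ c hc').symm⟩

theorem norm_one_add_mul_sub_one_sub_mul_le (c₁ c₂ d₁ d₂ : ℂ) {q : ℝ} (hq₀ : 0 ≤ q)
    (hq₁ : q ≤ 1) :
    ‖(1 + q) * c₁ * d₁ - (1 - q) * c₂ * d₂‖ ≤
      ‖c₁‖ * ‖d₁‖ + ‖c₂‖ * ‖d₂‖ + q * ‖conj c₁ * d₁ + conj c₂ * d₂‖ := by
  obtain ⟨ω, hω, hc₁⟩ := exists_norm_eq_one_eq_mul_conj c₁
  -- writing `q c₁ d₁ = q ω (conj c₁ d₁)` brings in `⟨c, d⟩`, at the cost of a `c₂`-term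
  have hsplit : (1 + q) * c₁ * d₁ - (1 - q) * c₂ * d₂ =
      c₁ * d₁ - ((1 - q) * c₂ + q * ω * conj c₂) * d₂ +
        q * ω * (conj c₁ * d₁ + conj c₂ * d₂) := by
    linear_combination (q * d₁) * hc₁
  have hc₂ : ‖(1 - q) * c₂ + q * ω * conj c₂‖ ≤ ‖c₂‖ := by
    calc _ ≤ ‖((1 - q : ℝ) : ℂ) * c₂‖ + ‖(q : ℂ) * ω * conj c₂‖ := by
          push_cast; exact norm_add_le _ _
      _ = ‖c₂‖ := by
        simp only [norm_mul, norm_real, Real.norm_of_nonneg (sub_nonneg.2 hq₁),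
          Real.norm_of_nonneg hq₀, hω, norm_conj]
        ring
  rw [hsplit]
  calc _ ≤ ‖c₁ * d₁ - ((1 - q) * c₂ + q * ω * conj c₂) * d₂‖ +
        ‖q * ω * (conj c₁ * d₁ + conj c₂ * d₂)‖ := norm_add_le _ _
    _ ≤ ‖c₁ * d₁‖ + ‖((1 - q) * c₂ + q * ω * conj c₂) * d₂‖ +
        ‖q * ω * (conj c₁ * d₁ + conj c₂ * d₂)‖ := by gcongr; exact norm_sub_le _ _
    _ ≤ _ := by
      rw [norm_mul, norm_mul, norm_mul (q * ω : ℂ), norm_mul, hω, norm_real,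
        Real.norm_of_nonneg hq₀, mul_one]
      gcongr

theorem norm_sub_mul_sq_add_norm_conj_mul_add_sq (c₁ c₂ d₁ d₂ : ℂ) :
    ‖c₂ * d₁ - c₁ * d₂‖ ^ 2 + ‖conj c₁ * d₁ + conj c₂ * d₂‖ ^ 2 =
      (‖c₁‖ ^ 2 + ‖c₂‖ ^ 2) * (‖d₁‖ ^ 2 + ‖d₂‖ ^ 2) := by
  simp only [Complex.sq_norm, normSq_apply, mul_re, mul_im, add_re, add_im, sub_re, sub_im, conj_re,
    conj_im]
  ring

theorem norm_add_mul_mul_sub_mul_le {α β q : ℝ} (hα : 0 ≤ α) (hβ : 0 ≤ β)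
    (hα2 : α ^ 2 = (1 + q) / 2) (hβ2 : β ^ 2 = (1 - q) / 2) (hq₀ : 0 ≤ q) (hq₁ : q ≤ 1)
    (c₁ c₂ d₁ d₂ : ℂ) :
    ‖(α * c₁ + β * c₂) * (α * d₁ - β * d₂)‖ ≤
      (‖c₁‖ * ‖d₁‖ + ‖c₂‖ * ‖d₂‖ + q * ‖conj c₁ * d₁ + conj c₂ * d₂‖) / 2 +
        α * β * ‖c₂ * d₁ - c₁ * d₂‖ := by
  have hα2' : (α : ℂ) ^ 2 = (1 + q) / 2 := by exact_mod_cast hα2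
  have hβ2' : (β : ℂ) ^ 2 = (1 - q) / 2 := by exact_mod_cast hβ2
  have hexpand : (α * c₁ + β * c₂) * (α * d₁ - β * d₂) =
      ((1 + q) * c₁ * d₁ - (1 - q) * c₂ * d₂) / 2 + (α * β : ℝ) * (c₂ * d₁ - c₁ * d₂) := by
    push_cast
    linear_combination c₁ * d₁ * hα2' - c₂ * d₂ * hβ2'
  rw [hexpand]
  refine (norm_add_le _ _).trans ?_
  rw [norm_div, norm_mul, norm_real, Real.norm_of_nonneg (by positivity), Complex.norm_two]
  gcongr
  exact norm_one_add_mul_sub_one_sub_mul_le c₁ c₂ d₁ d₂ hq₀ hq₁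

end Complex

section Projection

variable {𝕜 E : Type*} [RCLike 𝕜] [NormedAddCommGroup E] [InnerProductSpace 𝕜 E]

open Submodule

theorem abs_norm_inner_sub_norm_inner_starProjection_le (K : Submodule 𝕜 E)
    [K.HasOrthogonalProjection] (a b : E) :
    |‖inner 𝕜 a b‖ - ‖inner 𝕜 (K.starProjection a) (K.starProjection b)‖| ≤
      ‖a‖ * ‖b‖ - ‖K.starProjection a‖ * ‖K.starProjection b‖ := by
  have hinner : inner 𝕜 a b = inner 𝕜 (K.starProjection a) (K.starProjection b) +
      inner 𝕜 (Kᗮ.starProjection a) (Kᗮ.starProjection b) := by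
    conv_lhs => rw [← K.starProjection_add_starProjection_orthogonal a,
      ← K.starProjection_add_starProjection_orthogonal b]
    simp only [inner_add_left, inner_add_right,
      inner_right_of_mem_orthogonal (K.starProjection_apply_mem _) (Kᗮ.starProjection_apply_mem _),
      inner_left_of_mem_orthogonal (K.starProjection_apply_mem _) (Kᗮ.starProjection_apply_mem _)]
    ring
  have hcs := norm_inner_le_norm (𝕜 := 𝕜) (Kᗮ.starProjection a) (Kᗮ.starProjection b)
  have hsplit := mul_add_mul_le_mul_of_sq_eq_add_sq (norm_nonneg a) (norm_nonneg b)
    (K.norm_sq_eq_add_norm_sq_starProjection a) (K.norm_sq_eq_add_norm_sq_starProjection b)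
  have htri := abs_norm_sub_norm_le (inner 𝕜 a b)
    (inner 𝕜 (K.starProjection a) (K.starProjection b))
  rw [hinner] at htri ⊢
  rw [add_sub_cancel_left] at htri
  linarith

theorem exists_norm_eq_one_inner_eq_zero (hdim : 2 ≤ Module.rank 𝕜 E) (x : E) :
    ∃ f : E, ‖f‖ = 1 ∧ inner 𝕜 x f = 0 := by
  have hK : (𝕜 ∙ x) ≠ ⊤ := by
    intro h
    have hrank : Module.rank 𝕜 (𝕜 ∙ x) ≤ 1 := by simpa using rank_span_le (R := 𝕜) {x}
    rw [h, rank_top] at hrank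
    exact absurd (hdim.trans hrank) (by norm_num)
  obtain ⟨v, hv, hv0⟩ := exists_mem_ne_zero_of_ne_bot (mt orthogonal_eq_bot_iff.1 hK)
  exact ⟨(‖v‖⁻¹ : 𝕜) • v, norm_smul_inv_norm hv0,
    inner_right_of_mem_orthogonal (mem_span_singleton_self x) (smul_mem _ _ hv)⟩

end Projection

section Plane

variable {H : Type*} [NormedAddCommGroup H] [InnerProductSpace ℂ H]

theorem exists_orthonormal_eq_add_smul_and_eq_sub_smul (hdim : 2 ≤ Module.rank ℂ H) {x y : H}
    (hx : ‖x‖ = 1) (hy : ‖y‖ = 1) {q α β : ℝ} (hxy : ⟪x, y⟫ = q) (hα : 0 < α) (hβ : 0 ≤ β)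
    (hα2 : α ^ 2 = (1 + q) / 2) (hβ2 : β ^ 2 = (1 - q) / 2) :
    ∃ e f : H, ‖e‖ = 1 ∧ ‖f‖ = 1 ∧ ⟪e, f⟫ = 0 ∧
      x = (α : ℂ) • e + (β : ℂ) • f ∧ y = (α : ℂ) • e - (β : ℂ) • f := by
  have hyx : ⟪y, x⟫ = q := by rw [← inner_conj_symm, hxy, Complex.conj_ofReal]
  have hsum : ‖x + y‖ = 2 * α := by
    rw [← pow_left_inj₀ (norm_nonneg _) (by positivity) two_ne_zero, norm_add_sq (𝕜 := ℂ), hx,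
      hy, hxy, mul_pow, hα2]
    simp only [one_pow, RCLike.re_to_complex, Complex.ofReal_re]
    ring
  have hdiff : ‖x - y‖ = 2 * β := by
    rw [← pow_left_inj₀ (norm_nonneg _) (by positivity) two_ne_zero, norm_sub_sq (𝕜 := ℂ), hx,
      hy, hxy, mul_pow, hβ2]
    simp only [one_pow, RCLike.re_to_complex, Complex.ofReal_re]
    ring
  have hsum0 : x + y ≠ 0 := by rw [← norm_ne_zero_iff, hsum]; positivity
  set e : H := (‖x + y‖⁻¹ : ℂ) • (x + y) with he_def
  have hxye : x + y = (2 * α : ℂ) • e := by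
    rw [he_def, smul_smul, ← (by exact_mod_cast hsum : ((‖x + y‖ : ℝ) : ℂ) = 2 * α),
      mul_inv_cancel₀ (by simpa using hsum0), one_smul]
  obtain ⟨f, hf, hef, hxyf⟩ : ∃ f : H, ‖f‖ = 1 ∧ ⟪e, f⟫ = 0 ∧ x - y = (2 * β : ℂ) • f := by
    rcases hβ.eq_or_lt with rfl | hβ
    · obtain ⟨f, hf, hef⟩ := exists_norm_eq_one_inner_eq_zero hdim e
      refine ⟨f, hf, hef, ?_⟩
      rw [mul_zero] at hdiff
      simpa [sub_eq_zero] using hdiff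
    · have hdiff0 : x - y ≠ 0 := by rw [← norm_ne_zero_iff, hdiff]; positivity
      refine ⟨(‖x - y‖⁻¹ : ℂ) • (x - y), norm_smul_inv_norm hdiff0, ?_, ?_⟩
      · rw [he_def, inner_smul_left, inner_smul_right, inner_add_left, inner_sub_right,
          inner_sub_right, inner_self_eq_norm_sq_to_K, inner_self_eq_norm_sq_to_K, hx, hy, hxy,
          hyx]
        simp
      · rw [smul_smul, ← (by exact_mod_cast hdiff : ((‖x - y‖ : ℝ) : ℂ) = 2 * β),
          mul_inv_cancel₀ (by simpa using hdiff0), one_smul]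
  refine ⟨e, f, norm_smul_inv_norm hsum0, hf, hef, ?_, ?_⟩
  · linear_combination (norm := module) (1 / 2 : ℂ) • hxye + (1 / 2 : ℂ) • hxyf
  · linear_combination (norm := module) (1 / 2 : ℂ) • hxye - (1 / 2 : ℂ) • hxyf

variable {e f : H}

theorem inner_smul_add_smul_of_orthonormal (he : ‖e‖ = 1) (hf : ‖f‖ = 1) (hef : ⟪e, f⟫ = 0)
    (c₁ c₂ d₁ d₂ : ℂ) : ⟪c₁ • e + c₂ • f, d₁ • e + d₂ • f⟫ = conj c₁ * d₁ + conj c₂ * d₂ := by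
  have hfe : ⟪f, e⟫ = 0 := inner_eq_zero_symm.1 hef
  simp only [inner_add_left, inner_add_right, inner_smul_left, inner_smul_right,
    inner_self_eq_norm_sq_to_K, he, hf, hef, hfe]
  simp [mul_comm]

theorem norm_smul_add_smul_sq_of_orthonormal (he : ‖e‖ = 1) (hf : ‖f‖ = 1) (hef : ⟪e, f⟫ = 0)
    (c₁ c₂ : ℂ) : ‖c₁ • e + c₂ • f‖ ^ 2 = ‖c₁‖ ^ 2 + ‖c₂‖ ^ 2 := by
  have horth : ⟪c₁ • e, c₂ • f⟫ = 0 := by simp [hef]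
  simp only [sq, norm_add_sq_eq_norm_sq_add_norm_sq_of_inner_eq_zero _ _ horth, norm_smul, he,
    hf, mul_one]

theorem norm_inner_mul_inner_le_buzanoBound_of_mem_span {α β q : ℝ} (hα : 0 ≤ α) (hβ : 0 ≤ β)
    (hα2 : α ^ 2 = (1 + q) / 2) (hβ2 : β ^ 2 = (1 - q) / 2) (hq₀ : 0 ≤ q) (hq₁ : q ≤ 1)
    (he : ‖e‖ = 1) (hf : ‖f‖ = 1) (hef : ⟪e, f⟫ = 0) {a b : H}
    (ha : a ∈ Submodule.span ℂ {e, f}) (hb : b ∈ Submodule.span ℂ {e, f}) :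
    ‖⟪a, (α : ℂ) • e + (β : ℂ) • f⟫ * ⟪b, (α : ℂ) • e - (β : ℂ) • f⟫‖ ≤
      buzanoBound q (‖a‖ * ‖b‖) ‖⟪a, b⟫‖ := by
  obtain ⟨c₁, c₂, rfl⟩ := Submodule.mem_span_pair.1 ha
  obtain ⟨d₁, d₂, rfl⟩ := Submodule.mem_span_pair.1 hb
  have hx : ⟪c₁ • e + c₂ • f, (α : ℂ) • e + (β : ℂ) • f⟫ = conj (α * c₁ + β * c₂) := by
    rw [inner_smul_add_smul_of_orthonormal he hf hef]
    simp [mul_comm]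
  have hy : ⟪d₁ • e + d₂ • f, (α : ℂ) • e - (β : ℂ) • f⟫ = conj (α * d₁ - β * d₂) := by
    rw [sub_eq_add_neg, ← neg_smul, inner_smul_add_smul_of_orthonormal he hf hef]
    simp [mul_comm, sub_eq_add_neg]
  have hab := inner_smul_add_smul_of_orthonormal he hf hef c₁ c₂ d₁ d₂
  have ha2 := norm_smul_add_smul_sq_of_orthonormal he hf hef c₁ c₂
  have hb2 := norm_smul_add_smul_sq_of_orthonormal he hf hef d₁ d₂
  have hdet : ‖c₂ * d₁ - c₁ * d₂‖ = √((‖c₁ • e + c₂ • f‖ * ‖d₁ • e + d₂ • f‖) ^ 2 -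
      ‖⟪c₁ • e + c₂ • f, d₁ • e + d₂ • f⟫‖ ^ 2) := by
    rw [mul_pow, ha2, hb2, hab, ← Complex.norm_sub_mul_sq_add_norm_conj_mul_add_sq,
      add_sub_cancel_right, Real.sqrt_sq (norm_nonneg _)]
  rw [hx, hy, ← map_mul, Complex.norm_conj, buzanoBound,
    sqrt_one_sub_sq_div_two_eq_mul hα hβ hα2 hβ2, ← hdet, hab]
  refine (Complex.norm_add_mul_mul_sub_mul_le hα hβ hα2 hβ2 hq₀ hq₁ c₁ c₂ d₁ d₂).trans ?_
  gcongr
  exact mul_add_mul_le_mul_of_sq_eq_add_sq (norm_nonneg _) (norm_nonneg _) ha2 hb2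

theorem norm_inner_mul_inner_le_buzanoBound {α β q : ℝ} (hα : 0 ≤ α) (hβ : 0 ≤ β)
    (hα2 : α ^ 2 = (1 + q) / 2) (hβ2 : β ^ 2 = (1 - q) / 2) (hq₀ : 0 ≤ q) (hq₁ : q ≤ 1)
    (he : ‖e‖ = 1) (hf : ‖f‖ = 1) (hef : ⟪e, f⟫ = 0) (a b : H) :
    ‖⟪a, (α : ℂ) • e + (β : ℂ) • f⟫ * ⟪b, (α : ℂ) • e - (β : ℂ) • f⟫‖ ≤
      buzanoBound q (‖a‖ * ‖b‖) ‖⟪a, b⟫‖ := by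
  set K := Submodule.span ℂ {e, f}
  have : FiniteDimensional ℂ K := FiniteDimensional.span_of_finite ℂ (Set.toFinite _)
  have hproj : ∀ c z, z ∈ K → ⟪c, z⟫ = ⟪K.starProjection c, z⟫ := fun c z hz => by
    rw [K.inner_starProjection_left_eq_right, K.starProjection_eq_self_iff.2 hz]
  have hxK : (α : ℂ) • e + (β : ℂ) • f ∈ K := Submodule.mem_span_pair.2 ⟨α, β, rfl⟩
  have hyK : (α : ℂ) • e - (β : ℂ) • f ∈ K :=
    Submodule.mem_span_pair.2 ⟨α, -β, by rw [neg_smul, ← sub_eq_add_neg]⟩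
  rw [hproj a _ hxK, hproj b _ hyK]
  exact (norm_inner_mul_inner_le_buzanoBound_of_mem_span hα hβ hα2 hβ2 hq₀ hq₁ he hf hef
    (K.starProjection_apply_mem a) (K.starProjection_apply_mem b)).trans
    (buzanoBound_le_buzanoBound hq₀ hq₁ (norm_nonneg _) (norm_inner_le_norm _ _)
      (abs_norm_inner_sub_norm_inner_starProjection_le K a b))

end Plane

theorem stmt1_general {H : Type*} [NormedAddCommGroup H] [InnerProductSpace ℂ H]
    (hdim : 2 ≤ Module.rank ℂ H) (a b x y : H) (q : ℝ) (hq : q ∈ Set.Icc (0 : ℝ) 1)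
    (hx : ‖x‖ = 1) (hy : ‖y‖ = 1) (hxy : ⟪x, y⟫ = (q : ℂ)) :
    ‖⟪a, x⟫ * ⟪b, y⟫‖ ≤
      (‖a‖ * ‖b‖ + q * ‖⟪a, b⟫‖) / 2 +
        (Real.sqrt (1 - q ^ 2) / 2) * Real.sqrt (‖a‖ ^ 2 * ‖b‖ ^ 2 - ‖⟪a, b⟫‖ ^ 2) := by
  obtain ⟨hq₀, hq₁⟩ := hq
  have hα2 : √((1 + q) / 2) ^ 2 = (1 + q) / 2 := Real.sq_sqrt (by linarith)
  have hβ2 : √((1 - q) / 2) ^ 2 = (1 - q) / 2 := Real.sq_sqrt (by linarith)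
  obtain ⟨e, f, he, hf, hef, rfl, rfl⟩ := exists_orthonormal_eq_add_smul_and_eq_sub_smul hdim hx
    hy hxy (Real.sqrt_pos.2 (by linarith)) (Real.sqrt_nonneg _) hα2 hβ2
  rw [← mul_pow]
  exact norm_inner_mul_inner_le_buzanoBound (Real.sqrt_nonneg _) (Real.sqrt_nonneg _) hα2 hβ2 hq₀
    hq₁ he hf hef a b

/-- The generalized Buzano inequality. -/
theorem stmt1 {H : Type*} [NormedAddCommGroup H] [InnerProductSpace ℂ H] [CompleteSpace H]
    (hdim : 2 ≤ Module.rank ℂ H) (a b x y : H) (q : ℝ) (hq : q ∈ Set.Icc (0 : ℝ) 1)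
    (hx : ‖x‖ = 1) (hy : ‖y‖ = 1) (hxy : ⟪x, y⟫ = (q : ℂ)) :
    ‖⟪a, x⟫ * ⟪b, y⟫‖ ≤
      (‖a‖ * ‖b‖ + q * ‖⟪a, b⟫‖) / 2 +
        (Real.sqrt (1 - q ^ 2) / 2) * Real.sqrt (‖a‖ ^ 2 * ‖b‖ ^ 2 - ‖⟪a, b⟫‖ ^ 2) :=
  stmt1_general hdim a b x y q hq hx hy hxy
end

section
/- For all vectors a, b in H, the numerical radius of the rank-one operator a⊗b, i.e. sup{ |⟨(a⊗b)x, x⟩| : x ∈ H, ‖x‖ = 1 }, equals (‖a‖·‖b‖ + |⟨a,b⟩|)/2. -/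
open scoped ComplexInnerProductSpace

/-- The rank-one operator `a ⊗ b` on a complex Hilbert space, acting by
`(a ⊗ b) x = ⟨x, a⟩ · b` (i.e. `x ↦ ⟪a, x⟫ • b` in Mathlib's convention, where the
inner product is conjugate-linear in the first slot). -/
noncomputable def rankOne {H : Type*} [NormedAddCommGroup H] [InnerProductSpace ℂ H]
    (a b : H) : H →L[ℂ] H :=
  (innerSL ℂ a).smulRight b

/-- The `q`-numerical radius `ω_q(A) = sup { |⟨Ax, y⟩| : ‖x‖ = ‖y‖ = 1, ⟨x, y⟩ = q }`. -/
noncomputable def qRad {H : Type*} [NormedAddCommGroup H] [InnerProductSpace ℂ H]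
    (q : ℝ) (A : H →L[ℂ] H) : ℝ :=
  sSup {r : ℝ | ∃ x y : H, ‖x‖ = 1 ∧ ‖y‖ = 1 ∧ ⟪x, y⟫ = (q : ℂ) ∧ r = ‖⟪A x, y⟫‖}

/-
Since `⟪(a ⊗ b) x, x⟫ = conj (⟪a, x⟫ ⟪x, b⟫)`, the upper bound is Buzano's inequality: the
reflection `v = 2 ⟪x, a⟫ x - a` of `a` in the line `𝕜 x` has `‖v‖ = ‖a‖` and
`⟪v, b⟫ + ⟪a, b⟫ = 2 ⟪a, x⟫ ⟪x, b⟫`. Equality holds at the normalised sum of `a / ‖a‖` and a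
unimodular multiple of `b / ‖b‖` whose inner product with `a` is nonnegative.
-/

section

open scoped InnerProductSpace

variable {𝕜 E : Type*} [RCLike 𝕜] [NormedAddCommGroup E] [InnerProductSpace 𝕜 E]

lemma norm_two_inner_smul_sub {x : E} (hx : ‖x‖ = 1) (a : E) :
    ‖(2 * ⟪x, a⟫_𝕜) • x - a‖ = ‖a‖ := by
  have hre : RCLike.re ⟪(2 * ⟪x, a⟫_𝕜) • x, a⟫_𝕜 = 2 * ‖⟪x, a⟫_𝕜‖ ^ 2 := by
    rw [inner_smul_left, map_mul (starRingEnd 𝕜), map_ofNat, mul_assoc, RCLike.conj_mul]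
    norm_cast
  refine (sq_eq_sq₀ (norm_nonneg _) (norm_nonneg _)).1 ?_
  rw [norm_sub_sq (𝕜 := 𝕜), hre, norm_smul, hx, norm_mul]
  simp only [RCLike.norm_ofNat]
  ring

/-- Buzano's inequality. -/
lemma norm_inner_mul_norm_inner_le {x : E} (hx : ‖x‖ = 1) (a b : E) :
    ‖⟪a, x⟫_𝕜‖ * ‖⟪x, b⟫_𝕜‖ ≤ (‖a‖ * ‖b‖ + ‖⟪a, b⟫_𝕜‖) / 2 := by
  set v := (2 * ⟪x, a⟫_𝕜) • x - a
  have hvb : ⟪v, b⟫_𝕜 + ⟪a, b⟫_𝕜 = 2 * (⟪a, x⟫_𝕜 * ⟪x, b⟫_𝕜) := by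
    simp only [v, inner_sub_left, inner_smul_left, map_mul, inner_conj_symm, map_ofNat]
    ring
  have key : 2 * (‖⟪a, x⟫_𝕜‖ * ‖⟪x, b⟫_𝕜‖) ≤ ‖a‖ * ‖b‖ + ‖⟪a, b⟫_𝕜‖ :=
    calc 2 * (‖⟪a, x⟫_𝕜‖ * ‖⟪x, b⟫_𝕜‖) = ‖⟪v, b⟫_𝕜 + ⟪a, b⟫_𝕜‖ := by
          rw [hvb, norm_mul, norm_mul, RCLike.norm_ofNat]
      _ ≤ ‖v‖ * ‖b‖ + ‖⟪a, b⟫_𝕜‖ :=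
          (norm_add_le _ _).trans (by gcongr; exact norm_inner_le_norm v b)
      _ = ‖a‖ * ‖b‖ + ‖⟪a, b⟫_𝕜‖ := by rw [norm_two_inner_smul_sub hx]
  linarith

lemma exists_norm_inner_mul_norm_inner_eq_of_norm_eq_one {e f : E} (he : ‖e‖ = 1)
    (hf : ‖f‖ = 1) :
    ∃ x : E, ‖x‖ = 1 ∧ ‖⟪e, x⟫_𝕜‖ * ‖⟪x, f⟫_𝕜‖ = (1 + ‖⟪e, f⟫_𝕜‖) / 2 := by
  obtain ⟨ω, hω, hωef⟩ := RCLike.exists_norm_eq_mul_self ⟪e, f⟫_𝕜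
  set c := ‖⟪e, f⟫_𝕜‖
  have hc : 0 ≤ c := norm_nonneg _
  set g := ω • f
  have heg : ⟪e, g⟫_𝕜 = c := by rw [inner_smul_right, ← hωef]
  have hg : ‖g‖ = 1 := by rw [norm_smul, hω, hf, one_mul]
  set s := e + g
  have hs : ‖s‖ ^ 2 = 2 * (1 + c) := by
    rw [norm_add_sq (𝕜 := 𝕜), he, hg, heg, RCLike.ofReal_re]
    ring
  have hs0 : s ≠ 0 := by
    rintro h
    rw [h, norm_zero] at hs
    linarith
  have hes : ⟪e, s⟫_𝕜 = (1 + c : ℝ) := by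
    rw [inner_add_right, inner_self_eq_norm_sq_to_K, he, heg]
    push_cast
    ring
  have hsg : ⟪s, g⟫_𝕜 = (1 + c : ℝ) := by
    rw [inner_add_left, inner_self_eq_norm_sq_to_K, hg, heg]
    push_cast
    ring
  have hsf : ‖⟪s, f⟫_𝕜‖ = 1 + c := by
    have hrot : ‖⟪s, g⟫_𝕜‖ = ‖⟪s, f⟫_𝕜‖ := by rw [inner_smul_right, norm_mul, hω, one_mul]
    rw [← hrot, hsg, RCLike.norm_ofReal, abs_of_nonneg (by positivity)]
  refine ⟨(‖s‖⁻¹ : 𝕜) • s, norm_smul_inv_norm hs0, ?_⟩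
  rw [inner_smul_right, inner_smul_left, norm_mul, norm_mul, RCLike.norm_conj, hsf, hes,
    RCLike.norm_ofReal, abs_of_nonneg (by positivity), ← RCLike.ofReal_inv, RCLike.norm_ofReal,
    abs_of_nonneg (by positivity)]
  field_simp
  linear_combination -hs

lemma exists_norm_inner_mul_norm_inner_eq {a b : E} (ha : a ≠ 0) (hb : b ≠ 0) :
    ∃ x : E, ‖x‖ = 1 ∧ ‖⟪a, x⟫_𝕜‖ * ‖⟪x, b⟫_𝕜‖ = (‖a‖ * ‖b‖ + ‖⟪a, b⟫_𝕜‖) / 2 := by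
  obtain ⟨x, hx, hval⟩ := exists_norm_inner_mul_norm_inner_eq_of_norm_eq_one (𝕜 := 𝕜)
    (norm_smul_inv_norm (𝕜 := 𝕜) ha) (norm_smul_inv_norm (𝕜 := 𝕜) hb)
  refine ⟨x, hx, ?_⟩
  simp only [inner_smul_left, inner_smul_right, norm_mul, RCLike.norm_conj, norm_inv,
    RCLike.norm_ofReal, abs_norm] at hval
  have ha' : ‖a‖ ≠ 0 := norm_ne_zero_iff.2 ha
  have hb' : ‖b‖ ≠ 0 := norm_ne_zero_iff.2 hb
  field_simp at hval
  linarith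

end

lemma inner_rankOne_apply_self {H : Type*} [NormedAddCommGroup H] [InnerProductSpace ℂ H]
    (a b x : H) : ⟪rankOne a b x, x⟫ = starRingEnd ℂ (⟪a, x⟫ * ⟪x, b⟫) := by
  simp only [rankOne, ContinuousLinearMap.smulRight_apply, innerSL_apply_apply, inner_smul_left,
    map_mul, inner_conj_symm]

theorem stmt2_general {H : Type*} [NormedAddCommGroup H] [InnerProductSpace ℂ H]
    (a b : H) :
    sSup {r : ℝ | ∃ x : H, ‖x‖ = 1 ∧ r = ‖⟪(rankOne a b) x, x⟫‖} =
      (‖a‖ * ‖b‖ + ‖⟪a, b⟫‖) / 2 := by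
  have hnorm (x : H) : ‖⟪rankOne a b x, x⟫‖ = ‖⟪a, x⟫‖ * ‖⟪x, b⟫‖ := by
    rw [inner_rankOne_apply_self, RCLike.norm_conj, norm_mul]
  have hle : ∀ r ∈ {r : ℝ | ∃ x : H, ‖x‖ = 1 ∧ r = ‖⟪(rankOne a b) x, x⟫‖},
      r ≤ (‖a‖ * ‖b‖ + ‖⟪a, b⟫‖) / 2 := by
    rintro _ ⟨x, hx, rfl⟩
    rw [hnorm]
    exact norm_inner_mul_norm_inner_le hx a b
  refine le_antisymm (Real.sSup_le hle (by positivity)) ?_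
  rcases eq_or_ne a 0 with rfl | ha
  · simpa using Real.sSup_nonneg (by rintro _ ⟨x, -, rfl⟩; positivity)
  rcases eq_or_ne b 0 with rfl | hb
  · simpa using Real.sSup_nonneg (by rintro _ ⟨x, -, rfl⟩; positivity)
  obtain ⟨x, hx, hval⟩ := exists_norm_inner_mul_norm_inner_eq (𝕜 := ℂ) ha hb
  exact le_csSup ⟨_, hle⟩ ⟨x, hx, by rw [hnorm, hval]⟩

/-- The numerical radius of a rank-one operator. -/
theorem stmt2 {H : Type*} [NormedAddCommGroup H] [InnerProductSpace ℂ H] [CompleteSpace H]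
    (hdim : 2 ≤ Module.rank ℂ H) (a b : H) :
    sSup {r : ℝ | ∃ x : H, ‖x‖ = 1 ∧ r = ‖⟪(rankOne a b) x, x⟫‖} =
      (‖a‖ * ‖b‖ + ‖⟪a, b⟫‖) / 2 :=
  stmt2_general a b
end

section
/- For all nonzero vectors a, b in H with ⟨a,b⟩ ≠ 0 and all q ∈ [0,1], the q-numerical radius of a⊗b satisfies ω_q(a⊗b) = λ·‖a‖·‖b‖, where λ = (1 + cos(arccos(q) − arctan(√((‖a‖·‖b‖/|⟨a,b⟩|)² − 1))))/2. -/
/-!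
Write `u`, `v` for the normalisations of `a`, `b`, so that
`|⟨(a ⊗ b) x, y⟩| = ‖a‖ ‖b‖ |⟨x, u⟩| |⟨v, y⟩|`. The Fubini–Study angle
`d(x, y) = arccos |⟨x, y⟩|` between unit vectors satisfies the triangle inequality, so with
`s = d(x, u)`, `t = d(v, y)`, `φ = d(x, y) = arccos q` and `ψ = d(u, v)` we get
`|φ - ψ| ≤ s + t ≤ π`, hence
`cos s cos t = (cos (s + t) + cos (s - t)) / 2 ≤ (1 + cos (φ - ψ)) / 2`.
Equality is attained in the real plane spanned by `u` (after a phase change) and a unit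
`e ⊥ u` with `v = cos ψ u + sin ψ e`: take `x`, `y` at angles `(ψ - φ) / 2` and `(ψ + φ) / 2`.
Finally `arctan √(r² - 1) = arccos r⁻¹` identifies the arctangent in the formula with `ψ`.
-/

open scoped ComplexInnerProductSpace

open Real

lemma Real.arctan_sqrt_sq_sub_one {x : ℝ} (hx : 1 ≤ x) : arctan √(x ^ 2 - 1) = arccos x⁻¹ := by
  have hx0 : 0 < x := by linarith
  rw [arccos_eq_arctan (inv_pos.2 hx0), div_inv_eq_mul]
  congr 1
  calc √(x ^ 2 - 1) = √((1 - x⁻¹ ^ 2) * x ^ 2) := by congr 1; field_simp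
    _ = √(1 - x⁻¹ ^ 2) * x := by rw [sqrt_mul' _ (sq_nonneg x), sqrt_sq hx0.le]

section FubiniStudy

variable {H : Type*} [NormedAddCommGroup H] [InnerProductSpace ℂ H]

/-- For unit vectors, the Fubini–Study distance between the lines `ℂ ∙ x` and `ℂ ∙ y`. -/
noncomputable def fsAngle (x y : H) : ℝ := arccos ‖⟪x, y⟫‖

lemma fsAngle_comm (x y : H) : fsAngle x y = fsAngle y x := by
  rw [fsAngle, fsAngle, norm_inner_symm]

lemma fsAngle_nonneg (x y : H) : 0 ≤ fsAngle x y := arccos_nonneg _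

lemma fsAngle_le_pi_div_two (x y : H) : fsAngle x y ≤ π / 2 :=
  arccos_le_pi_div_two.2 (norm_nonneg _)

lemma cos_fsAngle {x y : H} (hx : ‖x‖ = 1) (hy : ‖y‖ = 1) : cos (fsAngle x y) = ‖⟪x, y⟫‖ :=
  cos_arccos (by linarith [norm_nonneg ⟪x, y⟫])
    (by simpa [hx, hy] using norm_inner_le_norm (𝕜 := ℂ) x y)

lemma sin_fsAngle (x y : H) : sin (fsAngle x y) = √(1 - ‖⟪x, y⟫‖ ^ 2) := sin_arccos _

lemma inner_sub_inner_smul_self {u : H} (hu : ‖u‖ = 1) (v : H) : ⟪u, v - ⟪u, v⟫ • u⟫ = 0 := by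
  rw [inner_sub_right, inner_smul_right, inner_self_eq_one_of_norm_eq_one hu, mul_one, sub_self]

lemma norm_sub_inner_smul_self {u v : H} (hu : ‖u‖ = 1) (hv : ‖v‖ = 1) :
    ‖v - ⟪u, v⟫ • u‖ = √(1 - ‖⟪u, v⟫‖ ^ 2) := by
  have hpyth := norm_add_sq_eq_norm_sq_add_norm_sq_of_inner_eq_zero (⟪u, v⟫ • u) (v - ⟪u, v⟫ • u)
    (by rw [inner_smul_left, inner_sub_inner_smul_self hu, mul_zero])
  rw [add_sub_cancel, hv, norm_smul, hu, mul_one] at hpyth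
  rw [← sqrt_sq (norm_nonneg (v - ⟪u, v⟫ • u))]
  congr 1
  linarith

lemma norm_inner_sub_inner_mul_inner_le {x y z : H} (hx : ‖x‖ = 1) (hy : ‖y‖ = 1)
    (hz : ‖z‖ = 1) :
    ‖⟪x, z⟫ - ⟪x, y⟫ * ⟪y, z⟫‖ ≤ √(1 - ‖⟪x, y⟫‖ ^ 2) * √(1 - ‖⟪y, z⟫‖ ^ 2) := by
  have hproj : ⟪x, z⟫ - ⟪x, y⟫ * ⟪y, z⟫ = ⟪x - ⟪y, x⟫ • y, z - ⟪y, z⟫ • y⟫ := by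
    simp only [inner_sub_left, inner_sub_right, inner_smul_left, inner_smul_right,
      inner_self_eq_one_of_norm_eq_one hy, inner_conj_symm]
    ring
  rw [hproj, ← norm_sub_inner_smul_self hy hz, norm_inner_symm x y,
    ← norm_sub_inner_smul_self hy hx]
  exact norm_inner_le_norm _ _

lemma fsAngle_le_add {x y z : H} (hx : ‖x‖ = 1) (hy : ‖y‖ = 1) (hz : ‖z‖ = 1) :
    fsAngle x z ≤ fsAngle x y + fsAngle y z := by
  have hcos : cos (fsAngle x y + fsAngle y z) ≤ ‖⟪x, z⟫‖ := by
    rw [cos_add, cos_fsAngle hx hy, cos_fsAngle hy hz, sin_fsAngle, sin_fsAngle, ← norm_mul]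
    linarith [norm_sub_norm_le (⟪x, y⟫ * ⟪y, z⟫) ⟪x, z⟫,
      norm_sub_rev (⟪x, y⟫ * ⟪y, z⟫) ⟪x, z⟫, norm_inner_sub_inner_mul_inner_le hx hy hz]
  calc fsAngle x z ≤ arccos (cos (fsAngle x y + fsAngle y z)) := antitone_arccos hcos
    _ = fsAngle x y + fsAngle y z :=
      arccos_cos (add_nonneg (fsAngle_nonneg x y) (fsAngle_nonneg y z))
        (by linarith [fsAngle_le_pi_div_two x y, fsAngle_le_pi_div_two y z, pi_pos])

lemma abs_sub_fsAngle_le {x y u v : H} (hx : ‖x‖ = 1) (hy : ‖y‖ = 1) (hu : ‖u‖ = 1)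
    (hv : ‖v‖ = 1) : |fsAngle x y - fsAngle u v| ≤ fsAngle x u + fsAngle v y := by
  have h₁ := fsAngle_le_add hu hx hv
  have h₂ := fsAngle_le_add hx hy hv
  have h₃ := fsAngle_le_add hx hu hy
  have h₄ := fsAngle_le_add hu hv hy
  rw [fsAngle_comm u x] at h₁
  rw [fsAngle_comm y v] at h₂
  rw [abs_le]
  constructor <;> linarith

lemma norm_inner_mul_norm_inner_le_s3 {x y u v : H} (hx : ‖x‖ = 1) (hy : ‖y‖ = 1) (hu : ‖u‖ = 1)
    (hv : ‖v‖ = 1) : ‖⟪x, u⟫‖ * ‖⟪v, y⟫‖ ≤ (1 + cos (fsAngle x y - fsAngle u v)) / 2 := by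
  set s := fsAngle x u
  set t := fsAngle v y
  have hcos : cos (s + t) ≤ cos (fsAngle x y - fsAngle u v) := by
    rw [← cos_abs (fsAngle x y - fsAngle u v)]
    exact cos_le_cos_of_nonneg_of_le_pi (abs_nonneg _)
      (by linarith [fsAngle_le_pi_div_two x u, fsAngle_le_pi_div_two v y, pi_pos])
      (abs_sub_fsAngle_le hx hy hu hv)
  rw [← cos_fsAngle hx hu, ← cos_fsAngle hv hy]
  linarith [cos_add s t, cos_sub s t, cos_le_one (s - t)]

end FubiniStudy

section Attainment

variable {H : Type*} [NormedAddCommGroup H] [InnerProductSpace ℂ H]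

lemma exists_norm_eq_one_inner_eq_zero_s3 (hdim : 2 ≤ Module.rank ℂ H) (u : H) :
    ∃ e : H, ‖e‖ = 1 ∧ ⟪u, e⟫ = 0 := by
  have hspan : (ℂ ∙ u)ᗮ ≠ ⊥ := by
    rw [Ne, Submodule.orthogonal_eq_bot_iff]
    intro htop
    have hrank : Module.rank ℂ (ℂ ∙ u) ≤ 1 := by simpa using rank_span_le (R := ℂ) ({u} : Set H)
    rw [htop, rank_top] at hrank
    exact absurd (hdim.trans hrank) (by norm_num)
  obtain ⟨w, hw, hw0⟩ := Submodule.exists_mem_ne_zero_of_ne_bot hspan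
  refine ⟨NormedSpace.normalize w, NormedSpace.norm_normalize hw0, ?_⟩
  rw [NormedSpace.normalize, ← Complex.coe_smul, inner_smul_right,
    Submodule.inner_right_of_mem_orthogonal (Submodule.mem_span_singleton_self u) hw, mul_zero]

lemma exists_norm_eq_one_inner_eq_zero_eq_smul (hdim : 2 ≤ Module.rank ℂ H) {u w : H}
    (huw : ⟪u, w⟫ = 0) : ∃ e : H, ‖e‖ = 1 ∧ ⟪u, e⟫ = 0 ∧ w = (‖w‖ : ℂ) • e := by
  by_cases hw : w = 0
  · obtain ⟨e, he, hue⟩ := exists_norm_eq_one_inner_eq_zero_s3 hdim u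
    exact ⟨e, he, hue, by simp [hw]⟩
  · have hsmul : (‖w‖ : ℂ) • NormedSpace.normalize w = w := by
      rw [Complex.coe_smul, NormedSpace.norm_smul_normalize]
    refine ⟨NormedSpace.normalize w, NormedSpace.norm_normalize hw, ?_, hsmul.symm⟩
    rw [← hsmul, inner_smul_right] at huw
    exact (mul_eq_zero.1 huw).resolve_left (by simpa using hw)

lemma exists_eq_cos_smul_add_sin_smul (hdim : 2 ≤ Module.rank ℂ H) {u v : H} (hu : ‖u‖ = 1)
    (hv : ‖v‖ = 1) :
    ∃ u' e : H, (∀ x, ‖⟪x, u'⟫‖ = ‖⟪x, u⟫‖) ∧ ‖u'‖ = 1 ∧ ‖e‖ = 1 ∧ ⟪u', e⟫ = 0 ∧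
      v = (cos (fsAngle u v) : ℂ) • u' + (sin (fsAngle u v) : ℂ) • e := by
  -- the phase of `⟪u, v⟫`; it makes `⟪ζ • u, v⟫ = ‖⟪u, v⟫‖` real
  set ζ := Complex.exp (Complex.arg ⟪u, v⟫ * Complex.I)
  have hζ : ‖ζ‖ = 1 := Complex.norm_exp_ofReal_mul_I _
  obtain ⟨e, he, hue, hw⟩ :=
    exists_norm_eq_one_inner_eq_zero_eq_smul hdim (inner_sub_inner_smul_self hu v)
  refine ⟨ζ • u, e, fun x ↦ ?_, ?_, he, ?_, ?_⟩
  · rw [inner_smul_right, norm_mul, hζ, one_mul]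
  · rw [norm_smul, hζ, hu, one_mul]
  · rw [inner_smul_left, hue, mul_zero]
  · rw [cos_fsAngle hu hv, sin_fsAngle, ← norm_sub_inner_smul_self hu hv, ← hw, smul_smul,
      Complex.norm_mul_exp_arg_mul_I, add_sub_cancel]

lemma inner_cos_smul_add_sin_smul {u e : H} (hu : ‖u‖ = 1) (he : ‖e‖ = 1) (hue : ⟪u, e⟫ = 0)
    (s t : ℝ) :
    ⟪(cos s : ℂ) • u + (sin s : ℂ) • e, (cos t : ℂ) • u + (sin t : ℂ) • e⟫ = (cos (s - t) : ℂ) := by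
  simp only [inner_add_left, inner_add_right, inner_smul_left, inner_smul_right,
    inner_self_eq_one_of_norm_eq_one hu, inner_self_eq_one_of_norm_eq_one he, hue,
    inner_eq_zero_symm.1 hue, Complex.conj_ofReal, cos_sub]
  push_cast
  ring

lemma exists_inner_eq_cos_norm_inner_mul_norm_inner_eq (hdim : 2 ≤ Module.rank ℂ H) {u v : H}
    (hu : ‖u‖ = 1) (hv : ‖v‖ = 1) (φ : ℝ) :
    ∃ x y : H, ‖x‖ = 1 ∧ ‖y‖ = 1 ∧ ⟪x, y⟫ = (cos φ : ℂ) ∧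
      ‖⟪x, u⟫‖ * ‖⟪v, y⟫‖ = (1 + cos (φ - fsAngle u v)) / 2 := by
  obtain ⟨u', e, hphase, hu', he, hue, hvψ⟩ := exists_eq_cos_smul_add_sin_smul hdim hu hv
  set ψ := fsAngle u v
  set p : ℝ → H := fun θ ↦ (cos θ : ℂ) • u' + (sin θ : ℂ) • e
  have hp : ∀ s t, ⟪p s, p t⟫ = (cos (s - t) : ℂ) := inner_cos_smul_add_sin_smul hu' he hue
  have hp_norm : ∀ θ, ‖p θ‖ = 1 := fun θ ↦ by
    rw [norm_eq_sqrt_re_inner (𝕜 := ℂ), hp, sub_self, cos_zero]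
    simp
  have hu'p : u' = p 0 := by simp [p]
  refine ⟨p ((ψ - φ) / 2), p ((ψ + φ) / 2), hp_norm _, hp_norm _, ?_, ?_⟩
  · rw [hp, show (ψ - φ) / 2 - (ψ + φ) / 2 = -φ by ring, cos_neg]
  · rw [← hphase, hu'p, hvψ, hp, hp, Complex.norm_real, Complex.norm_real, norm_eq_abs,
      norm_eq_abs, show ψ - (ψ + φ) / 2 = (ψ - φ) / 2 - 0 by ring, abs_mul_abs_self, sub_zero,
      ← sq, cos_sq, show 2 * ((ψ - φ) / 2) = -(φ - ψ) by ring, cos_neg]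
    ring

end Attainment

section RankOne

variable {H : Type*} [NormedAddCommGroup H] [InnerProductSpace ℂ H]

lemma inner_rankOne_apply (a b x y : H) : ⟪rankOne a b x, y⟫ = ⟪x, a⟫ * ⟪b, y⟫ := by
  rw [rankOne, ContinuousLinearMap.smulRight_apply, innerSL_apply_apply, inner_smul_left,
    inner_conj_symm]

lemma norm_inner_rankOne_apply (a b x y : H) :
    ‖⟪rankOne a b x, y⟫‖ =
      ‖a‖ * ‖b‖ * (‖⟪x, NormedSpace.normalize a⟫‖ * ‖⟪NormedSpace.normalize b, y⟫‖) := by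
  rw [inner_rankOne_apply, norm_mul]
  conv_lhs => rw [← NormedSpace.norm_smul_normalize a, ← NormedSpace.norm_smul_normalize b]
  rw [← Complex.coe_smul, ← Complex.coe_smul, inner_smul_right, inner_smul_left, norm_mul,
    norm_mul, Complex.conj_ofReal, Complex.norm_real, norm_norm, Complex.norm_real, norm_norm]
  ring

lemma norm_inner_normalize_normalize (a b : H) :
    ‖⟪NormedSpace.normalize a, NormedSpace.normalize b⟫‖ = ‖⟪a, b⟫‖ / (‖a‖ * ‖b‖) := by
  rw [NormedSpace.normalize, NormedSpace.normalize, ← Complex.coe_smul, ← Complex.coe_smul,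
    inner_smul_left, inner_smul_right, norm_mul, norm_mul, Complex.conj_ofReal,
    Complex.norm_real, Complex.norm_real, norm_inv, norm_inv, norm_norm, norm_norm]
  field_simp

end RankOne

theorem stmt3_general {H : Type*} [NormedAddCommGroup H] [InnerProductSpace ℂ H]
    (hdim : 2 ≤ Module.rank ℂ H) (a b : H)
    (hab : ⟪a, b⟫ ≠ 0) (q : ℝ) (hq : q ∈ Set.Icc (0 : ℝ) 1) :
    qRad q (rankOne a b) =
      (1 + Real.cos (Real.arccos q -
          Real.arctan (Real.sqrt ((‖a‖ * ‖b‖ / ‖⟪a, b⟫‖) ^ 2 - 1)))) / 2 *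
        (‖a‖ * ‖b‖) := by
  obtain ⟨hq₀, hq₁⟩ := hq
  have ha : ‖NormedSpace.normalize a‖ = 1 :=
    NormedSpace.norm_normalize (by rintro rfl; simp at hab)
  have hb : ‖NormedSpace.normalize b‖ = 1 :=
    NormedSpace.norm_normalize (by rintro rfl; simp at hab)
  have hψ : arctan √((‖a‖ * ‖b‖ / ‖⟪a, b⟫‖) ^ 2 - 1) =
      fsAngle (NormedSpace.normalize a) (NormedSpace.normalize b) := by
    rw [arctan_sqrt_sq_sub_one ((one_le_div (norm_pos_iff.2 hab)).2 (norm_inner_le_norm a b)),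
      inv_div, fsAngle, norm_inner_normalize_normalize]
  rw [hψ]
  refine IsGreatest.csSup_eq ⟨?_, ?_⟩
  · obtain ⟨x, y, hx, hy, hxy, hvalue⟩ :=
      exists_inner_eq_cos_norm_inner_mul_norm_inner_eq hdim ha hb (arccos q)
    refine ⟨x, y, hx, hy, by rw [hxy, cos_arccos (by linarith) hq₁], ?_⟩
    rw [norm_inner_rankOne_apply, hvalue, mul_comm]
  · rintro r ⟨x, y, hx, hy, hxy, rfl⟩
    have hφ : fsAngle x y = arccos q := by
      rw [fsAngle, hxy, Complex.norm_real, norm_of_nonneg hq₀]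
    rw [norm_inner_rankOne_apply, mul_comm, ← hφ]
    exact mul_le_mul_of_nonneg_right (norm_inner_mul_norm_inner_le_s3 hx hy ha hb) (by positivity)

/-- Explicit formula for `λ_q(a ⊗ b)` when `⟨a, b⟩ ≠ 0`. -/
theorem stmt3 {H : Type*} [NormedAddCommGroup H] [InnerProductSpace ℂ H] [CompleteSpace H]
    (hdim : 2 ≤ Module.rank ℂ H) (a b : H) (ha : a ≠ 0) (hb : b ≠ 0)
    (hab : ⟪a, b⟫ ≠ 0) (q : ℝ) (hq : q ∈ Set.Icc (0 : ℝ) 1) :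
    qRad q (rankOne a b) =
      (1 + Real.cos (Real.arccos q -
          Real.arctan (Real.sqrt ((‖a‖ * ‖b‖ / ‖⟪a, b⟫‖) ^ 2 - 1)))) / 2 *
        (‖a‖ * ‖b‖) :=
  stmt3_general hdim a b hab q hq
end

section
/- For all vectors a, b in H and all q ∈ [0,1], the q-numerical radius (computed on the Hilbert space H ⊕ H) of the off-diagonal operator T on H ⊕ H defined by T(x, y) = ((a⊗b)y, 0) = (⟨y,a⟩·b, 0) equals ((1 + √(1−q²))/2)·‖a‖·‖b‖. -/
/-!
Since `⟪T x, y⟫ = conj ⟪a, x₂⟫ ⟪b, y₁⟫`, one has `|⟪T x, y⟫| ≤ ‖x₂‖ ‖y₁‖ ‖a‖ ‖b‖`, and the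
problem reduces to maximising `‖x₂‖ ‖y₁‖` over unit vectors `x = (x₁, x₂)`, `y = (y₁, y₂)` with
`⟪x, y⟫ = q`. The constraint only forces `q ≤ ‖x₁‖ ‖y₁‖ + ‖x₂‖ ‖y₂‖`, a condition on two unit
vectors of `ℝ²`, under which `‖x₂‖ ‖y₁‖ ≤ (1 + √(1 - q²)) / 2`. Equality is attained at
`x = (c b̂, s â)`, `y = (s b̂, c â)` with `s² = (1 + √(1 - q²)) / 2`, `2 s c = q`.
-/

open scoped ComplexInnerProductSpace

/- With `(c, s) = (cos α, sin α)` and `(t, d) = (sin γ, cos γ)` one has `c t + s d = sin (α + γ)`,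
`c d - s t = cos (α + γ)` and `2 s t = cos (α - γ) - cos (α + γ)`. -/
theorem mul_le_half_one_add_sqrt_one_sub_sq {q c s t d : ℝ} (hq : 0 ≤ q)
    (hcs : c ^ 2 + s ^ 2 = 1) (htd : t ^ 2 + d ^ 2 = 1) (hP : q ≤ c * t + s * d) :
    s * t ≤ (1 + √(1 - q ^ 2)) / 2 := by
  have hsum : s * t + c * d ≤ 1 := by nlinarith [sq_nonneg (s - t), sq_nonneg (c - d)]
  have hdiff : s * t - c * d ≤ √(1 - q ^ 2) := by
    apply Real.le_sqrt_of_sq_le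
    nlinarith [mul_self_le_mul_self hq hP]
  linarith

theorem exists_sq_add_sq_eq_one_and_two_mul_eq {q : ℝ} (hq0 : 0 ≤ q) (hq1 : q ≤ 1) :
    ∃ s c : ℝ, s ^ 2 = (1 + √(1 - q ^ 2)) / 2 ∧ c ^ 2 + s ^ 2 = 1 ∧ 2 * s * c = q := by
  set w := √(1 - q ^ 2)
  have hw2 : w ^ 2 = 1 - q ^ 2 := Real.sq_sqrt (by nlinarith)
  have hw1 : w ≤ 1 := Real.sqrt_le_one.mpr (by nlinarith)
  have hw0 : 0 ≤ w := Real.sqrt_nonneg _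
  refine ⟨√((1 + w) / 2), √((1 - w) / 2), Real.sq_sqrt (by linarith), ?_, ?_⟩
  · rw [Real.sq_sqrt (by linarith), Real.sq_sqrt (by linarith)]
    ring
  · rw [mul_assoc, ← Real.sqrt_mul (by linarith), show (1 + w) / 2 * ((1 - w) / 2) = (q / 2) ^ 2
      by nlinarith, Real.sqrt_sq (by linarith)]
    ring

section InnerProductSpace

open scoped InnerProductSpace

variable {𝕜 E F : Type*} [RCLike 𝕜] [NormedAddCommGroup E] [InnerProductSpace 𝕜 E]
  [NormedAddCommGroup F] [InnerProductSpace 𝕜 F]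

theorem norm_inner_smul_inv_norm_self (x : E) : ‖⟪x, (‖x‖⁻¹ : 𝕜) • x⟫_𝕜‖ = ‖x‖ := by
  rw [inner_smul_right, inner_self_eq_norm_sq_to_K, norm_mul, norm_inv, norm_pow,
    RCLike.norm_ofReal, abs_norm]
  rcases eq_or_ne ‖x‖ 0 with h | h
  · simp [h]
  · field_simp

namespace WithLp

theorem norm_inner_le_norm_fst_mul_add_norm_snd_mul (x y : WithLp 2 (E × F)) :
    ‖⟪x, y⟫_𝕜‖ ≤ ‖x.fst‖ * ‖y.fst‖ + ‖x.snd‖ * ‖y.snd‖ :=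
  calc ‖⟪x, y⟫_𝕜‖ = ‖⟪x.fst, y.fst⟫_𝕜 + ⟪x.snd, y.snd⟫_𝕜‖ := rfl
    _ ≤ ‖⟪x.fst, y.fst⟫_𝕜‖ + ‖⟪x.snd, y.snd⟫_𝕜‖ := norm_add_le _ _
    _ ≤ _ := add_le_add (norm_inner_le_norm _ _) (norm_inner_le_norm _ _)

theorem norm_snd_mul_norm_fst_le {q : ℝ} (hq : 0 ≤ q) {x y : WithLp 2 (E × F)}
    (hx : ‖x‖ = 1) (hy : ‖y‖ = 1) (hxy : q ≤ ‖⟪x, y⟫_𝕜‖) :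
    ‖x.snd‖ * ‖y.fst‖ ≤ (1 + √(1 - q ^ 2)) / 2 := by
  have hx2 : ‖x.fst‖ ^ 2 + ‖x.snd‖ ^ 2 = 1 := by
    rw [← prod_norm_sq_eq_of_L2, hx, one_pow]
  have hy2 : ‖y.fst‖ ^ 2 + ‖y.snd‖ ^ 2 = 1 := by
    rw [← prod_norm_sq_eq_of_L2, hy, one_pow]
  exact mul_le_half_one_add_sqrt_one_sub_sq hq hx2 hy2
    (hxy.trans (norm_inner_le_norm_fst_mul_add_norm_snd_mul x y))

variable {c s : ℝ} {u : E} {v : F}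

theorem norm_toLp_smul_smul (hcs : c ^ 2 + s ^ 2 = 1) (hu : ‖u‖ = 1) (hv : ‖v‖ = 1) :
    ‖toLp 2 ((c : 𝕜) • u, (s : 𝕜) • v)‖ = 1 := by
  have h : ‖toLp 2 ((c : 𝕜) • u, (s : 𝕜) • v)‖ ^ 2 = 1 := by
    simp [prod_norm_sq_eq_of_L2, norm_smul, hu, hv, hcs]
  exact (pow_eq_one_iff_of_nonneg (norm_nonneg _) two_ne_zero).mp h

theorem inner_toLp_smul_smul (hu : ‖u‖ = 1) (hv : ‖v‖ = 1) :
    ⟪toLp 2 ((c : 𝕜) • u, (s : 𝕜) • v), toLp 2 ((s : 𝕜) • u, (c : 𝕜) • v)⟫_𝕜 =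
      ((2 * s * c : ℝ) : 𝕜) := by
  simp only [prod_inner_apply, inner_smul_left, inner_smul_right,
    inner_self_eq_norm_sq_to_K, hu, hv, RCLike.conj_ofReal]
  push_cast
  ring

end WithLp

end InnerProductSpace

section

variable {H : Type*} [NormedAddCommGroup H] [InnerProductSpace ℂ H] {q : ℝ}

theorem qRad_nonneg (A : H →L[ℂ] H) : 0 ≤ qRad q A :=
  Real.sSup_nonneg <| by rintro _ ⟨x, y, -, -, -, rfl⟩; exact norm_nonneg _

theorem qRad_le {A : H →L[ℂ] H} {M : ℝ} (hM : 0 ≤ M)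
    (h : ∀ x y : H, ‖x‖ = 1 → ‖y‖ = 1 → ⟪x, y⟫ = (q : ℂ) → ‖⟪A x, y⟫‖ ≤ M) :
    qRad q A ≤ M :=
  Real.sSup_le (by rintro _ ⟨x, y, hx, hy, hxy, rfl⟩; exact h x y hx hy hxy) hM

theorem norm_inner_le_qRad (A : H →L[ℂ] H) {x y : H} (hx : ‖x‖ = 1) (hy : ‖y‖ = 1)
    (hxy : ⟪x, y⟫ = (q : ℂ)) : ‖⟪A x, y⟫‖ ≤ qRad q A := by
  refine le_csSup ⟨‖A‖, ?_⟩ ⟨x, y, hx, hy, hxy, rfl⟩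
  rintro _ ⟨x', y', hx', hy', -, rfl⟩
  calc ‖⟪A x', y'⟫‖ ≤ ‖A x'‖ * ‖y'‖ := norm_inner_le_norm _ _
    _ ≤ ‖A‖ * ‖x'‖ * ‖y'‖ := by gcongr; exact A.le_opNorm x'
    _ = ‖A‖ := by rw [hx', hy', mul_one, mul_one]

def IsOffDiagRankOne (a b : H) (T : WithLp 2 (H × H) →L[ℂ] WithLp 2 (H × H)) : Prop :=
  ∀ x y : H, T ((WithLp.equiv 2 (H × H)).symm (x, y)) =
    (WithLp.equiv 2 (H × H)).symm ((rankOne a b) y, 0)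

namespace IsOffDiagRankOne

variable {a b : H} {T : WithLp 2 (H × H) →L[ℂ] WithLp 2 (H × H)}

theorem norm_inner_apply (hT : IsOffDiagRankOne a b T) (x y : WithLp 2 (H × H)) :
    ‖⟪T x, y⟫‖ = ‖⟪a, x.snd⟫‖ * ‖⟪b, y.fst⟫‖ := by
  have hTx : T x = (WithLp.equiv 2 (H × H)).symm (rankOne a b x.snd, 0) := hT x.fst x.snd
  simp [hTx, rankOne, inner_smul_left, norm_inner_symm x.snd a]

theorem qRad_le (hT : IsOffDiagRankOne a b T) (hq : 0 ≤ q) :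
    qRad q T ≤ (1 + √(1 - q ^ 2)) / 2 * (‖a‖ * ‖b‖) := by
  refine _root_.qRad_le (by positivity) fun x y hx hy hxy => ?_
  have hqxy : q ≤ ‖⟪x, y⟫‖ := by simp [hxy, abs_of_nonneg hq]
  calc ‖⟪T x, y⟫‖ = ‖⟪a, x.snd⟫‖ * ‖⟪b, y.fst⟫‖ := hT.norm_inner_apply x y
    _ ≤ ‖a‖ * ‖x.snd‖ * (‖b‖ * ‖y.fst‖) := by gcongr <;> exact norm_inner_le_norm _ _
    _ = ‖x.snd‖ * ‖y.fst‖ * (‖a‖ * ‖b‖) := by ring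
    _ ≤ _ := by gcongr; exact WithLp.norm_snd_mul_norm_fst_le hq hx hy hqxy

theorem le_qRad (hT : IsOffDiagRankOne a b T) (hq0 : 0 ≤ q) (hq1 : q ≤ 1) :
    (1 + √(1 - q ^ 2)) / 2 * (‖a‖ * ‖b‖) ≤ qRad q T := by
  rcases eq_or_ne a 0 with rfl | ha
  · simpa using qRad_nonneg T
  rcases eq_or_ne b 0 with rfl | hb
  · simpa using qRad_nonneg T
  obtain ⟨s, c, hs2, hcs, hsc⟩ := exists_sq_add_sq_eq_one_and_two_mul_eq hq0 hq1
  set u : H := (‖b‖⁻¹ : ℂ) • b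
  set v : H := (‖a‖⁻¹ : ℂ) • a
  have hu : ‖u‖ = 1 := norm_smul_inv_norm hb
  have hv : ‖v‖ = 1 := norm_smul_inv_norm ha
  have hbu : ‖⟪b, u⟫‖ = ‖b‖ := norm_inner_smul_inv_norm_self b
  have hav : ‖⟪a, v⟫‖ = ‖a‖ := norm_inner_smul_inv_norm_self a
  have hx := WithLp.norm_toLp_smul_smul (𝕜 := ℂ) hcs hu hv
  have hy := WithLp.norm_toLp_smul_smul (𝕜 := ℂ) (by linarith : s ^ 2 + c ^ 2 = 1) hu hv
  have hxy := WithLp.inner_toLp_smul_smul (𝕜 := ℂ) (c := c) (s := s) hu hv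
  rw [hsc] at hxy
  refine le_of_eq_of_le ?_ (norm_inner_le_qRad T hx hy hxy)
  rw [hT.norm_inner_apply]
  change _ = ‖⟪a, (s : ℂ) • v⟫‖ * ‖⟪b, (s : ℂ) • u⟫‖
  rw [inner_smul_right a v, inner_smul_right b u, norm_mul, norm_mul, hbu, hav,
    Complex.norm_real, Real.norm_eq_abs, ← hs2, ← sq_abs s]
  ring

end IsOffDiagRankOne

end

theorem stmt6_general {H : Type*} [NormedAddCommGroup H] [InnerProductSpace ℂ H]
    (a b : H) (q : ℝ) (hq : q ∈ Set.Icc (0 : ℝ) 1)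
    (T : WithLp 2 (H × H) →L[ℂ] WithLp 2 (H × H))
    (hT : ∀ x y : H,
      T ((WithLp.equiv 2 (H × H)).symm (x, y)) =
        (WithLp.equiv 2 (H × H)).symm ((rankOne a b) y, 0)) :
    qRad q T = (1 + Real.sqrt (1 - q ^ 2)) / 2 * (‖a‖ * ‖b‖) :=
  have hT' : IsOffDiagRankOne a b T := hT
  le_antisymm (hT'.qRad_le hq.1) (hT'.le_qRad hq.1 hq.2)

/-- The `q`-numerical radius of the off-diagonal operator `T(x, y) = ((a ⊗ b) y, 0)`
on `H ⊕ H` equals `((1 + √(1 - q²)) / 2) · ‖a‖ · ‖b‖`. -/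
theorem stmt6 {H : Type*} [NormedAddCommGroup H] [InnerProductSpace ℂ H] [CompleteSpace H]
    (hdim : 2 ≤ Module.rank ℂ H) (a b : H) (q : ℝ) (hq : q ∈ Set.Icc (0 : ℝ) 1)
    (T : WithLp 2 (H × H) →L[ℂ] WithLp 2 (H × H))
    (hT : ∀ x y : H,
      T ((WithLp.equiv 2 (H × H)).symm (x, y)) =
        (WithLp.equiv 2 (H × H)).symm ((rankOne a b) y, 0)) :
    qRad q T = (1 + Real.sqrt (1 - q ^ 2)) / 2 * (‖a‖ * ‖b‖) :=
  stmt6_general a b q hq T hT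
end

section
/- For every bounded linear operator A on H and every q ∈ [0,1], the q-numerical range satisfies W_q(A) = { q·⟨Ay,y⟩ + √(1−q²)·⟨At,y⟩ : y, t ∈ H, ‖y‖ = ‖t‖ = 1, ⟨t,y⟩ = 0 }. -/
/-!
Given a unit vector `y`, the component of a unit vector `x` orthogonal to `y` is `x - q • y`,
where `q = ⟪y, x⟫`; by Pythagoras it has norm `√(1 - q²)`, so `x = q • y + √(1 - q²) • t` for a
unit vector `t ⟂ y` (normalise that component, or, when it vanishes, take any unit `t ⟂ y`,
which exists in dimension at least two). Conversely every such combination is a unit vector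
with `⟪y, x⟫ = q`, and `⟪y, A x⟫` expands linearly.
-/

-- Reopening `ComplexInnerProductSpace` after `InnerProductSpace` keeps the unsubscripted `⟪y, x⟫`
-- of the main statement parseable.
open scoped InnerProductSpace ComplexInnerProductSpace

section

variable {𝕜 E : Type*} [RCLike 𝕜] [NormedAddCommGroup E] [InnerProductSpace 𝕜 E]

theorem exists_norm_eq_one_inner_eq_zero_s16 (hdim : 2 ≤ Module.rank 𝕜 E) (y : E) :
    ∃ t : E, ‖t‖ = 1 ∧ ⟪y, t⟫_𝕜 = 0 := by
  have hperp : (𝕜 ∙ y)ᗮ ≠ ⊥ := by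
    rw [Ne, Submodule.orthogonal_eq_bot_iff]
    intro hspan
    have : Module.rank 𝕜 E ≤ 1 := by
      rw [← rank_top 𝕜 E, ← hspan]
      simpa using rank_span_le (R := 𝕜) ({y} : Set E)
    exact absurd (hdim.trans this) (not_le.mpr Cardinal.one_lt_two)
  obtain ⟨v, hv, hv0⟩ := (Submodule.ne_bot_iff _).mp hperp
  refine ⟨(‖v‖⁻¹ : 𝕜) • v, ?_, ?_⟩
  · simp [norm_smul, hv0]
  · simp [inner_smul_right, Submodule.mem_orthogonal_singleton_iff_inner_right.mp hv]

theorem exists_norm_eq_one_inner_eq_zero_and_eq_norm_smul (hdim : 2 ≤ Module.rank 𝕜 E)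
    {y r : E} (hr : ⟪y, r⟫_𝕜 = 0) :
    ∃ t : E, ‖t‖ = 1 ∧ ⟪y, t⟫_𝕜 = 0 ∧ r = (‖r‖ : 𝕜) • t := by
  rcases eq_or_ne r 0 with rfl | hr0
  · obtain ⟨t, ht, hyt⟩ := exists_norm_eq_one_inner_eq_zero_s16 hdim y
    exact ⟨t, ht, hyt, by simp⟩
  · refine ⟨(‖r‖⁻¹ : 𝕜) • r, by simp [norm_smul, hr0], by simp [inner_smul_right, hr], ?_⟩
    rw [smul_smul, mul_inv_cancel₀ (RCLike.ofReal_ne_zero.mpr (norm_ne_zero_iff.mpr hr0)),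
      one_smul]

theorem norm_ofReal_smul_add_ofReal_smul_eq_one {y t : E} (hy : ‖y‖ = 1) (ht : ‖t‖ = 1)
    (hyt : ⟪y, t⟫_𝕜 = 0) {a b : ℝ} (hab : a ^ 2 + b ^ 2 = 1) :
    ‖(a : 𝕜) • y + (b : 𝕜) • t‖ = 1 := by
  have horth : ⟪(a : 𝕜) • y, (b : 𝕜) • t⟫_𝕜 = 0 := by
    simp [inner_smul_left, inner_smul_right, hyt]
  have hsq := norm_add_sq_eq_norm_sq_add_norm_sq_of_inner_eq_zero (𝕜 := 𝕜) _ _ horth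
  simp only [norm_smul, RCLike.norm_ofReal, hy, ht, mul_one] at hsq
  rw [← pow_eq_one_iff_of_nonneg (norm_nonneg _) two_ne_zero]
  nlinarith [sq_abs a, sq_abs b]

theorem exists_eq_ofReal_smul_add_sqrt_smul (hdim : 2 ≤ Module.rank 𝕜 E) {x y : E}
    (hx : ‖x‖ = 1) (hy : ‖y‖ = 1) {q : ℝ} (hxy : ⟪y, x⟫_𝕜 = q) :
    ∃ t : E, ‖t‖ = 1 ∧ ⟪y, t⟫_𝕜 = 0 ∧ x = (q : 𝕜) • y + (√(1 - q ^ 2) : 𝕜) • t := by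
  set r := x - (q : 𝕜) • y
  have hyr : ⟪y, r⟫_𝕜 = 0 := by
    simp [r, inner_sub_right, inner_smul_right, hxy, inner_self_eq_norm_sq_to_K, hy]
  have hx_eq : x = (q : 𝕜) • y + r := by simp [r]
  have hr : ‖r‖ = √(1 - q ^ 2) := by
    have hpyth := norm_add_sq_eq_norm_sq_add_norm_sq_of_inner_eq_zero (𝕜 := 𝕜) ((q : 𝕜) • y) r
      (by simp [inner_smul_left, hyr])
    rw [← hx_eq, hx, norm_smul, hy, RCLike.norm_ofReal] at hpyth
    rw [eq_comm, Real.sqrt_eq_iff_mul_self_eq] <;> nlinarith [sq_abs q, norm_nonneg r]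
  obtain ⟨t, ht, hyt, hrt⟩ := exists_norm_eq_one_inner_eq_zero_and_eq_norm_smul hdim hyr
  exact ⟨t, ht, hyt, by rw [hx_eq, hrt, hr]⟩

end

theorem stmt16_general {H : Type*} [NormedAddCommGroup H] [InnerProductSpace ℂ H]
    (hdim : 2 ≤ Module.rank ℂ H) (A : H →L[ℂ] H) (q : ℝ) (hq : q ∈ Set.Icc (0 : ℝ) 1) :
    {w : ℂ | ∃ x y : H, ‖x‖ = 1 ∧ ‖y‖ = 1 ∧ ⟪y, x⟫ = (q : ℂ) ∧ w = ⟪y, A x⟫} =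
      {w : ℂ | ∃ y t : H, ‖y‖ = 1 ∧ ‖t‖ = 1 ∧ ⟪y, t⟫ = 0 ∧
        w = (q : ℂ) * ⟪y, A y⟫ + (Real.sqrt (1 - q ^ 2) : ℂ) * ⟪y, A t⟫} := by
  ext w
  constructor
  · rintro ⟨x, y, hx, hy, hxy, rfl⟩
    obtain ⟨t, ht, hyt, rfl⟩ := exists_eq_ofReal_smul_add_sqrt_smul hdim hx hy hxy
    exact ⟨y, t, hy, ht, hyt, by simp⟩
  · rintro ⟨y, t, hy, ht, hyt, rfl⟩
    have hsum : q ^ 2 + √(1 - q ^ 2) ^ 2 = 1 := by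
      rw [Real.sq_sqrt (by nlinarith [hq.1, hq.2])]
      ring
    refine ⟨(q : ℂ) • y + (√(1 - q ^ 2) : ℂ) • t, y,
      norm_ofReal_smul_add_ofReal_smul_eq_one hy ht hyt hsum, hy, ?_, by simp⟩
    simp [hyt, inner_self_eq_norm_sq_to_K, hy]

/-- Reformulation of the `q`-numerical range. Here the paper's inner product
`⟨u, v⟩` (linear in the first slot) corresponds to Mathlib's `⟪v, u⟫` (which is
conjugate-linear in the first slot). -/
theorem stmt16 {H : Type*} [NormedAddCommGroup H] [InnerProductSpace ℂ H] [CompleteSpace H]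
    (hdim : 2 ≤ Module.rank ℂ H) (A : H →L[ℂ] H) (q : ℝ) (hq : q ∈ Set.Icc (0 : ℝ) 1) :
    {w : ℂ | ∃ x y : H, ‖x‖ = 1 ∧ ‖y‖ = 1 ∧ ⟪y, x⟫ = (q : ℂ) ∧ w = ⟪y, A x⟫} =
      {w : ℂ | ∃ y t : H, ‖y‖ = 1 ∧ ‖t‖ = 1 ∧ ⟪y, t⟫ = 0 ∧
        w = (q : ℂ) * ⟪y, A y⟫ + (Real.sqrt (1 - q ^ 2) : ℂ) * ⟪y, A t⟫} :=
  stmt16_general hdim A q hq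
end
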